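/- Under the hypotheses of the M(α,φ)–M(β,ψ) coefficient system, if additionally |b_2| ≤ 2, |c_2| ≤ 2, and σ B_1^2 D_1^2 − (1+α)^2(1+2β)(B_2−B_1)D_1^2 − (1+β)^2(1+2α)(D_2−D_1)B_1^2 ≠ 0, then |a_2| ≤ B_1 D_1 √(B_1(1+2β) + D_1(1+2α)) / √(|σ B_1^2 D_1^2 − (1+α)^2(1+2β)(B_2−B_1)D_1^2 − (1+β)^2(1+2α)(D_2−D_1)B_1^2|), where σ = 2 + 3α + 3β + 4αβ. -/

import Mathlib

/-!
Squaring the first-coefficient relations expresses `c₁²` and `b₁²` through `a₂²`; adding the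
two second-coefficient relations with weights `(1 + 2β)` and `(1 + 2α)` eliminates `a₃`. What
remains says that `a₂²` times the denominator equals `B₁²D₁²((1 + 2β)B₁c₂ + (1 + 2α)D₁b₂)/2`,
and `|b₂|, |c₂| ≤ 2` bound the right-hand side by `B₁²D₁²(B₁(1 + 2β) + D₁(1 + 2α))`.
-/

theorem sq_mul_eq_of_coeff_relations {K : Type*} [Field K] [CharZero K]
    (a₂ a₃ b₁ b₂ c₁ c₂ α β B₁ B₂ D₁ D₂ : K)
    (h1 : (1 + α) * a₂ = B₁ * c₁ / 2)
    (h2 : 2 * (1 + 2 * α) * a₃ - (1 + 3 * α) * a₂ ^ 2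
      = B₁ / 2 * (c₂ - c₁ ^ 2 / 2) + B₂ / 4 * c₁ ^ 2)
    (h3 : -((1 + β) * a₂) = D₁ * b₁ / 2)
    (h4 : (3 + 5 * β) * a₂ ^ 2 - 2 * (1 + 2 * β) * a₃
      = D₁ / 2 * (b₂ - b₁ ^ 2 / 2) + D₂ / 4 * b₁ ^ 2) :
    a₂ ^ 2 * ((2 + 3 * α + 3 * β + 4 * α * β) * B₁ ^ 2 * D₁ ^ 2
        - (1 + α) ^ 2 * (1 + 2 * β) * (B₂ - B₁) * D₁ ^ 2
        - (1 + β) ^ 2 * (1 + 2 * α) * (D₂ - D₁) * B₁ ^ 2)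
      = B₁ ^ 2 * D₁ ^ 2 * ((1 + 2 * β) * B₁ * c₂ + (1 + 2 * α) * D₁ * b₂) / 2 := by
  have hc : B₁ ^ 2 * c₁ ^ 2 = 4 * (1 + α) ^ 2 * a₂ ^ 2 := by
    linear_combination (-(2 * B₁ * c₁ + 4 * (1 + α) * a₂)) * h1
  have hb : D₁ ^ 2 * b₁ ^ 2 = 4 * (1 + β) ^ 2 * a₂ ^ 2 := by
    linear_combination (4 * (1 + β) * a₂ - 2 * D₁ * b₁) * h3
  linear_combination (1 + 2 * β) * B₁ ^ 2 * D₁ ^ 2 * h2 + (1 + 2 * α) * B₁ ^ 2 * D₁ ^ 2 * h4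
    + (1 + 2 * β) * (B₂ - B₁) * D₁ ^ 2 / 4 * hc + (1 + 2 * α) * (D₂ - D₁) * B₁ ^ 2 / 4 * hb

theorem norm_ofReal_mul_add_ofReal_mul_le {𝕜 : Type*} [RCLike 𝕜] {p q r : ℝ} {x y : 𝕜}
    (hp : 0 ≤ p) (hq : 0 ≤ q) (hx : ‖x‖ ≤ r) (hy : ‖y‖ ≤ r) :
    ‖(p : 𝕜) * x + (q : 𝕜) * y‖ ≤ (p + q) * r :=
  calc ‖(p : 𝕜) * x + (q : 𝕜) * y‖ ≤ p * ‖x‖ + q * ‖y‖ := by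
        refine (norm_add_le _ _).trans_eq ?_
        simp only [norm_mul, RCLike.norm_ofReal, abs_of_nonneg hp, abs_of_nonneg hq]
    _ ≤ (p + q) * r := by nlinarith

theorem le_mul_sqrt_div_sqrt_of_sq_mul_le {x M S e : ℝ} (hx : 0 ≤ x) (hM : 0 ≤ M) (he : 0 < e)
    (h : x ^ 2 * e ≤ M ^ 2 * S) : x ≤ M * √S / √e := by
  rw [le_div_iff₀ (Real.sqrt_pos.mpr he)]
  calc x * √e = √(x ^ 2 * e) := by rw [Real.sqrt_mul (by positivity), Real.sqrt_sq hx]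
    _ ≤ √(M ^ 2 * S) := Real.sqrt_le_sqrt h
    _ = M * √S := by rw [Real.sqrt_mul (by positivity), Real.sqrt_sq hM]

/-- The bound on `|a₂|` when `f ∈ M(α,φ)` and `f⁻¹ ∈ M(β,ψ)`. -/
theorem MM_a2_bound
    (a₂ a₃ b₁ b₂ c₁ c₂ : ℂ) (α β B₁ B₂ D₁ D₂ : ℝ)
    (hα : 0 ≤ α) (hβ : 0 ≤ β) (hB₁ : 0 < B₁) (hD₁ : 0 < D₁)
    (h1 : (1 + (α : ℂ)) * a₂ = (B₁ : ℂ) * c₁ / 2)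
    (h2 : 2 * (1 + 2 * (α : ℂ)) * a₃ - (1 + 3 * (α : ℂ)) * a₂ ^ 2
      = (B₁ : ℂ) / 2 * (c₂ - c₁ ^ 2 / 2) + (B₂ : ℂ) / 4 * c₁ ^ 2)
    (h3 : -((1 + (β : ℂ)) * a₂) = (D₁ : ℂ) * b₁ / 2)
    (h4 : (3 + 5 * (β : ℂ)) * a₂ ^ 2 - 2 * (1 + 2 * (β : ℂ)) * a₃
      = (D₁ : ℂ) / 2 * (b₂ - b₁ ^ 2 / 2) + (D₂ : ℂ) / 4 * b₁ ^ 2)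
    (hb₂ : ‖b₂‖ ≤ 2) (hc₂ : ‖c₂‖ ≤ 2)
    (hden : (2 + 3 * α + 3 * β + 4 * α * β) * B₁ ^ 2 * D₁ ^ 2
        - (1 + α) ^ 2 * (1 + 2 * β) * (B₂ - B₁) * D₁ ^ 2
        - (1 + β) ^ 2 * (1 + 2 * α) * (D₂ - D₁) * B₁ ^ 2 ≠ 0) :
    ‖a₂‖ ≤
      B₁ * D₁ * Real.sqrt (B₁ * (1 + 2 * β) + D₁ * (1 + 2 * α)) /
        Real.sqrt |(2 + 3 * α + 3 * β + 4 * α * β) * B₁ ^ 2 * D₁ ^ 2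
          - (1 + α) ^ 2 * (1 + 2 * β) * (B₂ - B₁) * D₁ ^ 2
          - (1 + β) ^ 2 * (1 + 2 * α) * (D₂ - D₁) * B₁ ^ 2| := by
  set E : ℝ := (2 + 3 * α + 3 * β + 4 * α * β) * B₁ ^ 2 * D₁ ^ 2
    - (1 + α) ^ 2 * (1 + 2 * β) * (B₂ - B₁) * D₁ ^ 2
    - (1 + β) ^ 2 * (1 + 2 * α) * (D₂ - D₁) * B₁ ^ 2
  set S : ℝ := B₁ * (1 + 2 * β) + D₁ * (1 + 2 * α)
  set w : ℂ := (((1 + 2 * β) * B₁ : ℝ) : ℂ) * c₂ + (((1 + 2 * α) * D₁ : ℝ) : ℂ) * b₂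
  have key : a₂ ^ 2 * (E : ℂ) = ((B₁ ^ 2 * D₁ ^ 2 / 2 : ℝ) : ℂ) * w := by
    push_cast [E, w]
    linear_combination sq_mul_eq_of_coeff_relations a₂ a₃ b₁ b₂ c₁ c₂ _ _ _ _ _ _ h1 h2 h3 h4
  have hw : ‖w‖ ≤ 2 * S := by
    refine (norm_ofReal_mul_add_ofReal_mul_le (p := (1 + 2 * β) * B₁) (q := (1 + 2 * α) * D₁)
      (by positivity) (by positivity) hc₂ hb₂).trans_eq ?_
    ring
  refine le_mul_sqrt_div_sqrt_of_sq_mul_le (norm_nonneg a₂) (by positivity) (abs_pos.mpr hden) ?_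
  calc ‖a₂‖ ^ 2 * |E| = B₁ ^ 2 * D₁ ^ 2 / 2 * ‖w‖ := by
        simpa [norm_mul, norm_pow, abs_of_pos hB₁, abs_of_pos hD₁] using congrArg norm key
    _ ≤ B₁ ^ 2 * D₁ ^ 2 / 2 * (2 * S) := by gcongr
    _ = (B₁ * D₁) ^ 2 * S := by ring
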